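/- For any sequence of states ρ = {ρ_n} and sequence of positive operators ω = {ω_n}, the spectral sup-divergence rate D̄(ρ‖ω) equals inf{α ∈ ℝ : lim_{n→∞} Tr[{ρ_n ≥ e^{nα} ω_n} ρ_n] = 0}. -/

import Mathlib

open scoped Kronecker ComplexOrder
open Filter Matrix

/-- The spectral projection `{A ≥ 0}` onto the span of eigenvectors of `A` with
nonnegative eigenvalues, for a Hermitian matrix `A` (junk value `0` otherwise). -/
noncomputable def specProj {ι : Type*} [Fintype ι] [DecidableEq ι] (A : Matrix ι ι ℂ) :
    Matrix ι ι ℂ :=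
  if hA : A.IsHermitian then
    (Matrix.IsHermitian.eigenvectorUnitary hA : Matrix ι ι ℂ) *
      Matrix.diagonal (fun i => if 0 ≤ hA.eigenvalues i then (1 : ℂ) else 0) *
      star (Matrix.IsHermitian.eigenvectorUnitary hA : Matrix ι ι ℂ)
  else 0

/-- A density matrix: positive semidefinite with unit trace. -/
def IsState {ι : Type*} [Fintype ι] (ρ : Matrix ι ι ℂ) : Prop :=
  ρ.PosSemidef ∧ ρ.trace = 1

/-- `Tr[{ρ - c ω ≥ 0} (ρ - c ω)]` as a real number. -/
noncomputable def projTrace {ι : Type*} [Fintype ι] [DecidableEq ι]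
    (ρ ω : Matrix ι ι ℂ) (c : ℝ) : ℝ :=
  ((specProj (ρ - (c : ℂ) • ω) * (ρ - (c : ℂ) • ω)).trace).re

/-- The quantum spectral sup-divergence rate `D̄(ρ‖ω)`. -/
noncomputable def Dsup {ι : ℕ → Type} [∀ n, Fintype (ι n)] [∀ n, DecidableEq (ι n)]
    (ρ ω : ∀ n, Matrix (ι n) (ι n) ℂ) : ℝ :=
  sInf {γ : ℝ | Tendsto (fun n : ℕ => projTrace (ρ n) (ω n) (Real.exp (n * γ)))
    atTop (nhds 0)}

/-- The quantum spectral inf-divergence rate `D̲(ρ‖ω)`. -/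
noncomputable def Dinf {ι : ℕ → Type} [∀ n, Fintype (ι n)] [∀ n, DecidableEq (ι n)]
    (ρ ω : ∀ n, Matrix (ι n) (ι n) ℂ) : ℝ :=
  sSup {γ : ℝ | Tendsto (fun n : ℕ => projTrace (ρ n) (ω n) (Real.exp (n * γ)))
    atTop (nhds 1)}

/-- The sup-spectral entropy rate `S̄`. -/
noncomputable def Ssup {ι : ℕ → Type} [∀ n, Fintype (ι n)] [∀ n, DecidableEq (ι n)]
    (ρ : ∀ n, Matrix (ι n) (ι n) ℂ) : ℝ :=
  - Dinf ρ (fun _ => 1)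

/-- The inf-spectral entropy rate `S̲`. -/
noncomputable def Sinf {ι : ℕ → Type} [∀ n, Fintype (ι n)] [∀ n, DecidableEq (ι n)]
    (ρ : ∀ n, Matrix (ι n) (ι n) ℂ) : ℝ :=
  - Dsup ρ (fun _ => 1)

/-- Partial trace over the second tensor factor. -/
noncomputable def ptraceSnd {a b : Type*} [Fintype b]
    (M : Matrix (a × b) (a × b) ℂ) : Matrix a a ℂ :=
  Matrix.of fun i j => ∑ k : b, M (i, k) (j, k)

/-- Partial trace over the first tensor factor. -/
noncomputable def ptraceFst {a b : Type*} [Fintype a]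
    (M : Matrix (a × b) (a × b) ℂ) : Matrix b b ℂ :=
  Matrix.of fun i j => ∑ k : a, M (k, i) (k, j)

/-- Partial trace over the third tensor factor of a tripartite system. -/
noncomputable def ptraceThird {a b c : Type*} [Fintype c]
    (M : Matrix (a × b × c) (a × b × c) ℂ) : Matrix (a × b) (a × b) ℂ :=
  Matrix.of fun i j => ∑ k : c, M (i.1, i.2, k) (j.1, j.2, k)

/-- A completely positive trace preserving map, given by a Kraus representation. -/
def IsCPTP {ι κ : Type*} [Fintype ι] [Fintype κ] [DecidableEq ι]
    (T : Matrix ι ι ℂ →ₗ[ℂ] Matrix κ κ ℂ) : Prop :=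
  ∃ (r : ℕ) (K : Fin r → Matrix κ ι ℂ),
    (∀ X, T X = ∑ k, K k * X * (K k)ᴴ) ∧ (∑ k, (K k)ᴴ * K k = 1)


section Aux

open scoped ComplexOrder

variable {m : Type*} [Fintype m] [DecidableEq m]

lemma psd_diag_re_nonneg {M : Matrix m m ℂ} (hM : M.PosSemidef) (i : m) :
    0 ≤ (M i i).re := by
  have := hM.re_dotProduct_nonneg (Pi.single i 1)
  simpa [dotProduct, mulVec, Pi.single_apply, Finset.sum_ite_eq] using this

lemma psd_trace_re_nonneg {M : Matrix m m ℂ} (hM : M.PosSemidef) :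
    0 ≤ M.trace.re := by
  rw [Matrix.trace, Complex.re_sum]
  exact Finset.sum_nonneg fun i _ => psd_diag_re_nonneg hM i

lemma trace_mul_psd_nonneg {Q R : Matrix m m ℂ} (hQ : Q.PosSemidef) (hR : R.PosSemidef) :
    0 ≤ (Q * R).trace.re := by
  obtain ⟨B, rfl⟩ : ∃ B : Matrix m m ℂ, R = Bᴴ * B := by
    open scoped MatrixOrder in
    obtain ⟨B, hB⟩ := CStarAlgebra.nonneg_iff_eq_star_mul_self.mp hR.nonneg
    exact ⟨B, hB⟩
  have h : (Q * (Bᴴ * B)).trace = (B * Q * Bᴴ).trace := by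
    rw [← Matrix.mul_assoc, Matrix.trace_mul_cycle]
  rw [h]
  exact psd_trace_re_nonneg (hQ.mul_mul_conjTranspose_same B)

lemma trace_mul_diagonal (M : Matrix m m ℂ) (d : m → ℂ) :
    (M * Matrix.diagonal d).trace = ∑ i, M i i * d i := by
  simp [Matrix.trace, Matrix.diag, Matrix.mul_diagonal]

lemma specProj_eq {A : Matrix m m ℂ} (hA : A.IsHermitian) :
    specProj A = (hA.eigenvectorUnitary : Matrix m m ℂ) *
      Matrix.diagonal (fun i => if 0 ≤ hA.eigenvalues i then (1 : ℂ) else 0) *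
      star (hA.eigenvectorUnitary : Matrix m m ℂ) := dif_pos hA

lemma star_mul_self_unit {A : Matrix m m ℂ} (hA : A.IsHermitian) :
    star (hA.eigenvectorUnitary : Matrix m m ℂ) * (hA.eigenvectorUnitary : Matrix m m ℂ) = 1 :=
  Matrix.mem_unitaryGroup_iff'.mp (hA.eigenvectorUnitary).2

lemma mul_star_self_unit {A : Matrix m m ℂ} (hA : A.IsHermitian) :
    (hA.eigenvectorUnitary : Matrix m m ℂ) * star (hA.eigenvectorUnitary : Matrix m m ℂ) = 1 :=
  Matrix.mem_unitaryGroup_iff.mp (hA.eigenvectorUnitary).2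

lemma specProj_posSemidef {A : Matrix m m ℂ} (hA : A.IsHermitian) :
    (specProj A).PosSemidef := by
  rw [specProj_eq hA]
  have hd : (Matrix.diagonal (fun i => if 0 ≤ hA.eigenvalues i then (1 : ℂ) else 0)).PosSemidef :=
    Matrix.PosSemidef.diagonal (fun i => by dsimp only; split <;> norm_num)
  simpa [Matrix.star_eq_conjTranspose] using
    hd.mul_mul_conjTranspose_same (hA.eigenvectorUnitary : Matrix m m ℂ)

lemma one_sub_specProj_posSemidef {A : Matrix m m ℂ} (hA : A.IsHermitian) :
    (1 - specProj A).PosSemidef := by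
  have key : 1 - specProj A = (hA.eigenvectorUnitary : Matrix m m ℂ) *
      Matrix.diagonal (fun i => 1 - (if 0 ≤ hA.eigenvalues i then (1 : ℂ) else 0)) *
      star (hA.eigenvectorUnitary : Matrix m m ℂ) := by
    rw [specProj_eq hA]
    have : (Matrix.diagonal (fun i => 1 - (if 0 ≤ hA.eigenvalues i then (1 : ℂ) else 0)))
        = 1 - Matrix.diagonal (fun i => if 0 ≤ hA.eigenvalues i then (1 : ℂ) else 0) := by
      rw [← Matrix.diagonal_one, Matrix.diagonal_sub]
    rw [this, Matrix.mul_sub, Matrix.sub_mul, Matrix.mul_one, mul_star_self_unit hA]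
  rw [key]
  have hd : (Matrix.diagonal
      (fun i => 1 - (if 0 ≤ hA.eigenvalues i then (1 : ℂ) else 0))).PosSemidef :=
    Matrix.PosSemidef.diagonal (fun i => by dsimp only; split <;> norm_num)
  simpa [Matrix.star_eq_conjTranspose] using
    hd.mul_mul_conjTranspose_same (hA.eigenvectorUnitary : Matrix m m ℂ)

lemma trace_mul_eq_diag {A : Matrix m m ℂ} (hA : A.IsHermitian) (Q : Matrix m m ℂ) :
    (Q * A).trace = ((star (hA.eigenvectorUnitary : Matrix m m ℂ) * Q *
      (hA.eigenvectorUnitary : Matrix m m ℂ)) *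
      Matrix.diagonal (RCLike.ofReal ∘ hA.eigenvalues)).trace := by
  set U : Matrix m m ℂ := (hA.eigenvectorUnitary : Matrix m m ℂ) with hU
  rw [← (show star (hA.eigenvectorUnitary : Matrix m m ℂ) * A *
      (hA.eigenvectorUnitary : Matrix m m ℂ) = Matrix.diagonal (RCLike.ofReal ∘ hA.eigenvalues) by
    rw [← hA.conjStarAlgAut_star_eigenvectorUnitary, Unitary.conjStarAlgAut_star_apply]), ← hU]
  rw [show (star U * Q * U) * (star U * A * U) = star U * (Q * (U * star U) * A * U) by
    noncomm_ring, mul_star_self_unit hA, Matrix.mul_one,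
    Matrix.trace_mul_comm (star U) (Q * A * U),
    show Q * A * U * star U = Q * A * (U * star U) by noncomm_ring, mul_star_self_unit hA,
    Matrix.mul_one]

lemma star_specProj_mul {A : Matrix m m ℂ} (hA : A.IsHermitian) :
    star (hA.eigenvectorUnitary : Matrix m m ℂ) * specProj A *
      (hA.eigenvectorUnitary : Matrix m m ℂ) =
      Matrix.diagonal (fun i => if 0 ≤ hA.eigenvalues i then (1 : ℂ) else 0) := by
  set U : Matrix m m ℂ := (hA.eigenvectorUnitary : Matrix m m ℂ) with hU
  rw [specProj_eq hA, ← hU]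
  rw [show star U * (U * Matrix.diagonal (fun i => if 0 ≤ hA.eigenvalues i then (1:ℂ) else 0)
    * star U) * U = (star U * U) * Matrix.diagonal
      (fun i => if 0 ≤ hA.eigenvalues i then (1:ℂ) else 0) * (star U * U) by noncomm_ring,
    star_mul_self_unit hA]
  simp

/-- Tr[specProj A * A] = sum of nonnegative eigenvalues. -/
lemma trace_specProj_mul_self {A : Matrix m m ℂ} (hA : A.IsHermitian) :
    ((specProj A * A).trace).re = ∑ i, if 0 ≤ hA.eigenvalues i then hA.eigenvalues i else 0 := by
  rw [trace_mul_eq_diag hA, star_specProj_mul hA, Matrix.diagonal_mul_diagonal,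
    Matrix.trace_diagonal, Complex.re_sum]
  congr 1; ext i
  simp only [Function.comp]
  split <;> simp

/-- Key maximality: for `0 ≤ Q ≤ 1`, `Tr[Q A] ≤ Tr[specProj A * A]`. -/
lemma trace_mul_le_specProj {A Q : Matrix m m ℂ} (hA : A.IsHermitian)
    (hQ : Q.PosSemidef) (hQ1 : (1 - Q).PosSemidef) :
    ((Q * A).trace).re ≤ ((specProj A * A).trace).re := by
  set U : Matrix m m ℂ := (hA.eigenvectorUnitary : Matrix m m ℂ) with hU
  rw [trace_specProj_mul_self hA, trace_mul_eq_diag hA, ← hU, trace_mul_diagonal,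
    Complex.re_sum]
  set Q' : Matrix m m ℂ := star U * Q * U with hQ'def
  have hQ'psd : Q'.PosSemidef := by
    simpa [hQ'def, Matrix.star_eq_conjTranspose] using hQ.conjTranspose_mul_mul_same U
  have hQ'1 : (1 - Q').PosSemidef := by
    have : (1 : Matrix m m ℂ) - Q' = star U * (1 - Q) * U := by
      rw [Matrix.mul_sub, Matrix.sub_mul, Matrix.mul_one, star_mul_self_unit hA, hQ'def]
    rw [this]
    simpa [Matrix.star_eq_conjTranspose] using hQ1.conjTranspose_mul_mul_same U
  apply Finset.sum_le_sum
  intro i _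
  have h0 : 0 ≤ (Q' i i).re := psd_diag_re_nonneg hQ'psd i
  have h1 : (Q' i i).re ≤ 1 := by
    have := psd_diag_re_nonneg hQ'1 i
    simp only [Matrix.sub_apply, Matrix.one_apply_eq, Complex.sub_re, Complex.one_re] at this
    linarith
  have hre : ((Q' i i) * (RCLike.ofReal ∘ hA.eigenvalues) i).re
      = (Q' i i).re * hA.eigenvalues i := by
    simp [Complex.mul_re, Complex.ofReal_re, Complex.ofReal_im, RCLike.ofReal]
  rw [hre]
  by_cases hev : 0 ≤ hA.eigenvalues i
  · rw [if_pos hev]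
    nlinarith
  · rw [if_neg hev]
    push_neg at hev
    nlinarith

lemma sub_smul_isHermitian {ρ ω : Matrix m m ℂ} (hρ : ρ.PosSemidef) (hω : ω.PosSemidef)
    (c : ℝ) : (ρ - (c : ℂ) • ω).IsHermitian := by
  apply hρ.isHermitian.sub
  unfold Matrix.IsHermitian
  rw [Matrix.conjTranspose_smul, Complex.star_def, Complex.conj_ofReal, hω.isHermitian.eq]

/-- linearity: `Tr[P(ρ - cω)].re = Tr[Pρ].re - c Tr[Pω].re`. -/
lemma trace_mul_sub_smul_re (P ρ ω : Matrix m m ℂ) (c : ℝ) :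
    ((P * (ρ - (c : ℂ) • ω)).trace).re = ((P * ρ).trace).re - c * ((P * ω).trace).re := by
  rw [Matrix.mul_sub, Matrix.mul_smul, Matrix.trace_sub, Matrix.trace_smul, Complex.sub_re,
    smul_eq_mul, Complex.re_ofReal_mul]

lemma projTrace_nonneg {ρ ω : Matrix m m ℂ} (hρ : ρ.PosSemidef) (hω : ω.PosSemidef) (c : ℝ) :
    0 ≤ projTrace ρ ω c := by
  rw [projTrace, trace_specProj_mul_self (sub_smul_isHermitian hρ hω c)]
  apply Finset.sum_nonneg
  intro i _
  split <;> simp_all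

lemma trace_specProj_mul_psd_nonneg {ρ ω M : Matrix m m ℂ} (hρ : ρ.PosSemidef)
    (hω : ω.PosSemidef) (hM : M.PosSemidef) (c : ℝ) :
    0 ≤ ((specProj (ρ - (c : ℂ) • ω) * M).trace).re :=
  trace_mul_psd_nonneg (specProj_posSemidef (sub_smul_isHermitian hρ hω c)) hM

lemma trace_specProj_mul_le_one {ρ ω : Matrix m m ℂ} (hρ : ρ.PosSemidef) (hρ1 : ρ.trace = 1)
    (hω : ω.PosSemidef) (c : ℝ) :
    ((specProj (ρ - (c : ℂ) • ω) * ρ).trace).re ≤ 1 := by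
  set P := specProj (ρ - (c : ℂ) • ω) with hP
  have h := trace_mul_psd_nonneg
    (one_sub_specProj_posSemidef (sub_smul_isHermitian hρ hω c)) hρ
  rw [← hP, Matrix.sub_mul, Matrix.one_mul, Matrix.trace_sub, Complex.sub_re, hρ1] at h
  simpa using h

/-- `projTrace ρ ω c ≤ Tr[P_c ρ].re`. -/
lemma projTrace_le_trace {ρ ω : Matrix m m ℂ} (hρ : ρ.PosSemidef) (hω : ω.PosSemidef)
    {c : ℝ} (hc : 0 < c) :
    projTrace ρ ω c ≤ ((specProj (ρ - (c : ℂ) • ω) * ρ).trace).re := by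
  rw [projTrace, trace_mul_sub_smul_re]
  have := trace_specProj_mul_psd_nonneg hρ hω hω c
  nlinarith

/-- Key estimate: `Tr[P_{c'} ρ].re ≤ projTrace ρ ω c + c / c'`. -/
lemma trace_le_projTrace_add {ρ ω : Matrix m m ℂ} (hρ : ρ.PosSemidef) (hρ1 : ρ.trace = 1)
    (hω : ω.PosSemidef) {c c' : ℝ} (hc : 0 < c) (hc' : 0 < c') :
    ((specProj (ρ - (c' : ℂ) • ω) * ρ).trace).re ≤ projTrace ρ ω c + c / c' := by
  set P' := specProj (ρ - (c' : ℂ) • ω) with hP'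
  have hH' := sub_smul_isHermitian hρ hω c'
  have hH := sub_smul_isHermitian hρ hω c
  have hmax : ((P' * (ρ - (c : ℂ) • ω)).trace).re ≤ projTrace ρ ω c :=
    trace_mul_le_specProj hH (specProj_posSemidef hH') (one_sub_specProj_posSemidef hH')
  rw [trace_mul_sub_smul_re] at hmax
  have hω' : 0 ≤ ((P' * ω).trace).re := trace_specProj_mul_psd_nonneg hρ hω hω c'
  have hpt' : 0 ≤ projTrace ρ ω c' := projTrace_nonneg hρ hω c'
  have hpt'eq : projTrace ρ ω c'
      = ((P' * ρ).trace).re - c' * ((P' * ω).trace).re := by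
    rw [projTrace, trace_mul_sub_smul_re]
  have hle1 : ((P' * ρ).trace).re ≤ 1 := trace_specProj_mul_le_one hρ hρ1 hω c'
  -- c' * Tr[P'ω] ≤ 1, hence c * Tr[P'ω] ≤ c / c'
  have hb : ((P' * ω).trace).re ≤ 1 / c' := by
    rw [le_div_iff₀ hc']
    nlinarith
  have : c * ((P' * ω).trace).re ≤ c / c' := by
    rw [div_eq_mul_one_div]
    nlinarith
  linarith

/-- `sInf` of two sets related by inclusion and right-openness coincide. -/
lemma sInf_eq_sInf_of_subset {S1 S2 : Set ℝ} (h21 : S2 ⊆ S1)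
    (h12 : ∀ γ ∈ S1, Set.Ioi γ ⊆ S2) : sInf S1 = sInf S2 := by
  rcases S1.eq_empty_or_nonempty with h | ⟨γ0, hγ0⟩
  · have h2 : S2 = ∅ := Set.subset_empty_iff.mp (h ▸ h21)
    rw [h, h2]
  · have h2ne : S2.Nonempty := ⟨γ0 + 1, h12 γ0 hγ0 (by simp)⟩
    by_cases hbdd : BddBelow S1
    · have hbdd2 : BddBelow S2 := hbdd.mono h21
      apply le_antisymm
      · exact csInf_le_csInf hbdd h2ne h21
      · apply le_csInf ⟨γ0, hγ0⟩
        intro γ hγ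
        calc sInf S2 ≤ sInf (Set.Ioi γ) :=
              csInf_le_csInf hbdd2 ⟨γ + 1, by simp⟩ (h12 γ hγ)
          _ = γ := csInf_Ioi
    · have hbdd2 : ¬ BddBelow S2 := by
        rintro ⟨b, hb⟩
        refine hbdd ⟨b - 1, fun γ hγ => ?_⟩
        by_contra h
        push_neg at h
        have h1 : γ + 1 ∈ S2 := h12 γ hγ (by simp)
        have := hb h1
        linarith
      rw [Real.sInf_of_not_bddBelow hbdd, Real.sInf_of_not_bddBelow hbdd2]

end Aux

/-- The spectral sup-divergence rate `D̄(ρ‖ω)` equals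
`inf {α : lim_n Tr[{ρ_n ≥ e^{nα} ω_n} ρ_n] = 0}`. -/
theorem Dsup_eq_classic {ι : ℕ → Type} [∀ n, Fintype (ι n)] [∀ n, DecidableEq (ι n)]
    (ρ ω : ∀ n, Matrix (ι n) (ι n) ℂ)
    (hρ : ∀ n, IsState (ρ n)) (hω : ∀ n, (ω n).PosSemidef) :
    Dsup ρ ω = sInf {α : ℝ | Filter.Tendsto (fun n : ℕ =>
      ((specProj (ρ n - (Real.exp (n * α) : ℂ) • ω n) * ρ n).trace).re)
      Filter.atTop (nhds 0)} := by
  rw [Dsup]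
  apply sInf_eq_sInf_of_subset
  · -- S2 ⊆ S1
    intro α hα
    simp only [Set.mem_setOf_eq] at hα ⊢
    apply tendsto_of_tendsto_of_tendsto_of_le_of_le tendsto_const_nhds hα
    · intro n
      exact projTrace_nonneg (hρ n).1 (hω n) _
    · intro n
      exact projTrace_le_trace (hρ n).1 (hω n) (Real.exp_pos _)
  · -- γ ∈ S1 → Ioi γ ⊆ S2
    intro γ hγ α hα
    simp only [Set.mem_setOf_eq] at hγ ⊢
    rw [Set.mem_Ioi] at hα
    have hub : Tendsto (fun n : ℕ => projTrace (ρ n) (ω n) (Real.exp (n * γ))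
        + Real.exp (n * (γ - α))) atTop (nhds 0) := by
      have h2 : Tendsto (fun n : ℕ => Real.exp (n * (γ - α))) atTop (nhds 0) := by
        apply Real.tendsto_exp_atBot.comp
        exact Filter.Tendsto.atTop_mul_const_of_neg' (by linarith : γ - α < 0) tendsto_natCast_atTop_atTop
      simpa using hγ.add h2
    apply tendsto_of_tendsto_of_tendsto_of_le_of_le tendsto_const_nhds hub
    · intro n
      exact trace_specProj_mul_psd_nonneg (hρ n).1 (hω n) (hρ n).1 _
    · intro n
      have key := trace_le_projTrace_add (hρ n).1 (hρ n).2 (hω n)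
        (Real.exp_pos ((n : ℝ) * γ)) (Real.exp_pos ((n : ℝ) * α))
      calc ((specProj (ρ n - (Real.exp (n * α) : ℂ) • ω n) * ρ n).trace).re
          ≤ projTrace (ρ n) (ω n) (Real.exp (n * γ))
            + Real.exp (n * γ) / Real.exp (n * α) := key
        _ = projTrace (ρ n) (ω n) (Real.exp (n * γ)) + Real.exp (n * (γ - α)) := by
            rw [← Real.exp_sub]
            ring_nf
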